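/- arXiv:2405.00105 — 4 statements merged into one kernel-verified Lean document; each statement's English description precedes it below -/
import Mathlib

section
/- The classical Doeblin coefficient is super-multiplicative under tensor products: α(P ⊗ R) ≥ α(P)·α(R), where (P ⊗ R)((y,y')|(x,x')) = P(y|x)·R(y'|x') and α(P) = Σ_y min_x P(y|x). -/
open Finset

theorem stmt2 {X Y X' Y' : Type*} [Fintype X] [Fintype Y] [Fintype X'] [Fintype Y']
    [Nonempty X] [Nonempty X']
    (P : X → Y → ℝ) (R : X' → Y' → ℝ)
    (hPpos : ∀ x y, 0 ≤ P x y) (hPsum : ∀ x, ∑ y, P x y = 1)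
    (hRpos : ∀ x y, 0 ≤ R x y) (hRsum : ∀ x, ∑ y, R x y = 1) :
    (∑ y, Finset.univ.inf' Finset.univ_nonempty fun x => P x y)
      * (∑ y', Finset.univ.inf' Finset.univ_nonempty fun x' => R x' y')
    ≤ ∑ p : Y × Y', Finset.univ.inf' Finset.univ_nonempty
        fun q : X × X' => P q.1 p.1 * R q.2 p.2 := by
  rw [Finset.sum_mul_sum, Fintype.sum_prod_type]
  apply Finset.sum_le_sum
  intro y _
  apply Finset.sum_le_sum
  intro y' _
  apply Finset.le_inf'
  intro q _
  apply mul_le_mul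
  · exact Finset.inf'_le _ (Finset.mem_univ q.1)
  · exact Finset.inf'_le _ (Finset.mem_univ q.2)
  · exact Finset.le_inf' _ _ fun x _ => hRpos x y'
  · exact hPpos q.1 y
end

section
/- For the depolarizing channel D_p on d×d matrices with p ∈ [0,1], the Doeblin minorization constant equals p: the maximum c ∈ [0,1] for which there exists a density matrix σ with D_p − c·R_σ completely positive is exactly p (achieved by σ = I/d). -/
open Matrix
open scoped ComplexOrder

noncomputable def trNorm {n : Type*} [Fintype n] [DecidableEq n] (A : Matrix n n ℂ) : ℝ :=
  ∑ i, Real.sqrt ((Matrix.isHermitian_conjTranspose_mul_self A).eigenvalues i)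

noncomputable def choi {m n : Type*} [Fintype m] [DecidableEq m] [Fintype n]
    (Φ : Matrix m m ℂ →ₗ[ℂ] Matrix n n ℂ) : Matrix (m × n) (m × n) ℂ :=
  Matrix.of fun p q => Φ (Matrix.single p.1 q.1 1) p.2 q.2

def IsCP {m n : Type*} [Fintype m] [DecidableEq m] [Fintype n]
    (Φ : Matrix m m ℂ →ₗ[ℂ] Matrix n n ℂ) : Prop := (choi Φ).PosSemidef

def IsTP {m n : Type*} [Fintype m] [Fintype n]
    (Φ : Matrix m m ℂ →ₗ[ℂ] Matrix n n ℂ) : Prop := ∀ A, (Φ A).trace = A.trace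

def IsDensity {n : Type*} [Fintype n] (ρ : Matrix n n ℂ) : Prop :=
  ρ.PosSemidef ∧ ρ.trace = 1

noncomputable def replacer {m n : Type*} [Fintype m] (σ : Matrix n n ℂ) :
    Matrix m m ℂ →ₗ[ℂ] Matrix n n ℂ where
  toFun A := A.trace • σ
  map_add' A B := by simp [Matrix.trace_add, add_smul]
  map_smul' c A := by simp [Matrix.trace_smul, smul_smul]

/-!
The Choi matrix of `(1 - p) id + p R_τ - c R_σ` is `(1 - p) |Ω⟩⟨Ω| + p (1 ⊗ τ) - c (1 ⊗ σ)`,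
where `Ω = ∑ₐ |a a⟩`. For `c = p` and `σ = τ = I/d` only `(1 - p) |Ω⟩⟨Ω| ≥ 0` remains. Conversely,
test positivity on `v = ∑ₐ |a, π a⟩` for a fixed-point-free permutation `π` (a cyclic shift, which
exists as `d > 1`): `v ⊥ Ω` and `⟨v, (1 ⊗ τ) v⟩ = tr τ`, so `0 ≤ p - c`.
-/

open scoped Kronecker

section Linearity

variable {m n : Type*} [Fintype m] [DecidableEq m] [Fintype n]

lemma choi_add (Φ Ψ : Matrix m m ℂ →ₗ[ℂ] Matrix n n ℂ) : choi (Φ + Ψ) = choi Φ + choi Ψ := by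
  ext; simp [choi]

lemma choi_sub (Φ Ψ : Matrix m m ℂ →ₗ[ℂ] Matrix n n ℂ) : choi (Φ - Ψ) = choi Φ - choi Ψ := by
  ext; simp [choi]

lemma choi_smul (a : ℂ) (Φ : Matrix m m ℂ →ₗ[ℂ] Matrix n n ℂ) : choi (a • Φ) = a • choi Φ := by
  ext; simp [choi]

end Linearity

def maxEntangled (n : Type*) [DecidableEq n] : n × n → ℂ := fun q => if q.1 = q.2 then 1 else 0

lemma choi_id {n : Type*} [Fintype n] [DecidableEq n] :
    choi (LinearMap.id : Matrix n n ℂ →ₗ[ℂ] Matrix n n ℂ)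
      = vecMulVec (maxEntangled n) (star (maxEntangled n)) := by
  ext ⟨a, b⟩ ⟨a', b'⟩
  simp only [choi, maxEntangled, vecMulVec, single_apply, of_apply, LinearMap.id_apply,
    Pi.star_apply, apply_ite star, star_one, star_zero, ite_and]
  split_ifs <;> simp

lemma choi_replacer {m n : Type*} [Fintype m] [DecidableEq m] [Fintype n] (σ : Matrix n n ℂ) :
    choi (replacer σ : Matrix m m ℂ →ₗ[ℂ] Matrix n n ℂ) = (1 : Matrix m m ℂ) ⊗ₖ σ := by
  ext ⟨a, b⟩ ⟨a', b'⟩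
  by_cases h : a = a' <;> simp [choi, replacer, h, trace_single_eq_of_ne]

lemma isCP_smul_id {n : Type*} [Fintype n] [DecidableEq n] {t : ℂ} (ht : 0 ≤ t) :
    IsCP (t • LinearMap.id : Matrix n n ℂ →ₗ[ℂ] Matrix n n ℂ) := by
  rw [IsCP, choi_smul, choi_id]
  exact (posSemidef_vecMulVec_self_star _).smul ht

lemma isDensity_maximallyMixed {n : Type*} [Fintype n] [DecidableEq n] [Nonempty n] :
    IsDensity ((Fintype.card n : ℂ)⁻¹ • (1 : Matrix n n ℂ)) := by
  refine ⟨PosDef.one.posSemidef.smul (by positivity), ?_⟩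
  rw [trace_smul, trace_one, smul_eq_mul, inv_mul_cancel₀ (by simp)]

def graphVec {m n : Type*} [DecidableEq n] (e : m ≃ n) : m × n → ℂ :=
  fun q => if e q.1 = q.2 then 1 else 0

lemma maxEntangled_dotProduct_graphVec {n : Type*} [Fintype n] [DecidableEq n]
    {π : Equiv.Perm n} (hπ : ∀ a, π a ≠ a) : star (maxEntangled n) ⬝ᵥ graphVec π = 0 := by
  simpa [dotProduct, Fintype.sum_prod_type, maxEntangled, graphVec] using fun a => (hπ a).symm

lemma graphVec_dotProduct_one_kronecker_mulVec {m n : Type*} [Fintype m] [DecidableEq m]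
    [Fintype n] [DecidableEq n] (e : m ≃ n) (σ : Matrix n n ℂ) :
    star (graphVec e) ⬝ᵥ (((1 : Matrix m m ℂ) ⊗ₖ σ) *ᵥ graphVec e) = σ.trace := by
  simpa [dotProduct, mulVec, Fintype.sum_prod_type, graphVec, one_apply, trace]
    using e.sum_comp fun i => σ i i

lemma dotProduct_vecMulVec_mulVec_of_orthogonal {ι : Type*} [Fintype ι] {v w : ι → ℂ}
    (h : star w ⬝ᵥ v = 0) : star v ⬝ᵥ (vecMulVec w (star w) *ᵥ v) = 0 := by
  simp [vecMulVec_mulVec, h]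

lemma graphVec_dotProduct_choi_mulVec {n : Type*} [Fintype n] [DecidableEq n]
    {π : Equiv.Perm n} (hπ : ∀ a, π a ≠ a) (a p c : ℂ) (τ σ : Matrix n n ℂ) :
    star (graphVec π) ⬝ᵥ
        (choi (a • LinearMap.id + p • replacer τ - c • replacer σ) *ᵥ graphVec π)
      = p * τ.trace - c * σ.trace := by
  simp only [choi_sub, choi_add, choi_smul, choi_id, choi_replacer, sub_mulVec,
    add_mulVec, smul_mulVec, dotProduct_sub, dotProduct_add, dotProduct_smul, smul_eq_mul,
    graphVec_dotProduct_one_kronecker_mulVec,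
    dotProduct_vecMulVec_mulVec_of_orthogonal (maxEntangled_dotProduct_graphVec hπ), mul_zero,
    zero_add]

theorem stmt11 {d : ℕ} (hd : 1 < d) (p : ℝ) (hp : p ∈ Set.Icc (0:ℝ) 1) :
    IsGreatest {c : ℝ | c ∈ Set.Icc (0:ℝ) 1 ∧
        ∃ σ : Matrix (Fin d) (Fin d) ℂ, IsDensity σ ∧
          IsCP (((1 - (p : ℂ)) • (LinearMap.id : Matrix (Fin d) (Fin d) ℂ →ₗ[ℂ] Matrix (Fin d) (Fin d) ℂ)
              + (p : ℂ) • replacer ((d : ℂ)⁻¹ • (1 : Matrix (Fin d) (Fin d) ℂ)))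
            - (c : ℂ) • replacer σ)} p := by
  have : NeZero d := ⟨by omega⟩
  have hmixed : IsDensity ((d : ℂ)⁻¹ • (1 : Matrix (Fin d) (Fin d) ℂ)) := by
    simpa using isDensity_maximallyMixed (n := Fin d)
  refine ⟨⟨hp, _, hmixed, ?_⟩, ?_⟩
  · rw [add_sub_cancel_right]
    exact isCP_smul_id (sub_nonneg.mpr (by exact_mod_cast hp.2))
  · rintro c ⟨-, σ, ⟨-, hσ⟩, hCP⟩
    have hrot : ∀ a, finRotate d a ≠ a := fun a =>
      Equiv.Perm.mem_support.mp (by simp [support_finRotate_of_le hd])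
    have h := hCP.dotProduct_mulVec_nonneg (graphVec (finRotate d))
    rw [graphVec_dotProduct_choi_mulVec hrot, hσ, hmixed.2, mul_one, mul_one, sub_nonneg] at h
    exact_mod_cast h
end

section
/- For any binary-input symmetric-output classical channel N with Shannon capacity C, the erasure channel E_{1−C} is more capable than N: for every input distribution p on {0,1}, I(X:Y) under E_{1−C} is at least I(X:Y) under N. In particular max_p I_N(X:Y) = C ≤ C(E_{1−C}) = C. -/
/-!
The outputs of a symmetric channel pair up along the orbits `{y, π y}`, and each pair is a binary
symmetric channel with crossover `δ`, weighted by `N true y + N false y`. For such a channel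
`I_q = h(q (1 - δ) + (1 - q) δ) - h(δ) ≤ h(q) (1 - h(δ)) = h(q) I_{1/2}`. With
`c(x) = 1 - h((1 - x) / 2)` this reads `c(1 - 2q) c(1 - 2δ) ≤ c((1 - 2q)(1 - 2δ))`, and since `c` is
a power series in `x` with nonnegative coefficients of total mass `c(1) = 1`, the inequality
`c(x) c(y) ≤ c(1) c(xy)` is Chebyshev's sum inequality. Summing over the orbits,
`I_q(N) ≤ h(q) I_{1/2}(N)`; hence the uniform input achieves the capacity, `C = I_{1/2}(N)`, and
`I_q(N) ≤ C h(q) = I_q(E_{1-C})`.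
-/

open Finset

noncomputable def binEnt (q : ℝ) : ℝ :=
  -(q * Real.logb 2 q) - (1 - q) * Real.logb 2 (1 - q)

noncomputable def ent {Y : Type*} [Fintype Y] (f : Y → ℝ) : ℝ :=
  ∑ y, -(f y * Real.logb 2 (f y))

/-- Mutual information between the input and output of a binary-input channel `W`,
when the input distribution puts probability `q` on `true`. -/
noncomputable def MI {Y : Type*} [Fintype Y] (q : ℝ) (W : Bool → Y → ℝ) : ℝ :=
  ent (fun y => q * W true y + (1 - q) * W false y)
    - (q * ent (W true) + (1 - q) * ent (W false))

/-- The binary erasure channel with erasure probability `ε`. -/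
def BEC (ε : ℝ) : Bool → Bool ⊕ Unit → ℝ := fun b y =>
  match y with
  | Sum.inl b' => if b' = b then 1 - ε else 0
  | Sum.inr _ => ε

open Filter Topology

lemma pow_mul_pow_add_pow_mul_pow_le {x y : ℝ} (hx0 : 0 ≤ x) (hx1 : x ≤ 1) (hy0 : 0 ≤ y)
    (hy1 : y ≤ 1) (m n : ℕ) : x ^ m * y ^ n + y ^ m * x ^ n ≤ (x * y) ^ m + (x * y) ^ n := by
  wlog hmn : m ≤ n generalizing m n
  · linarith [this n m (le_of_not_ge hmn)]
  obtain ⟨d, rfl⟩ := Nat.exists_eq_add_of_le hmn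
  have hxd : x ^ d ≤ 1 := pow_le_one₀ hx0 hx1
  have hyd : y ^ d ≤ 1 := pow_le_one₀ hy0 hy1
  have key : y ^ d + x ^ d ≤ 1 + x ^ d * y ^ d := by nlinarith
  calc x ^ m * y ^ (m + d) + y ^ m * x ^ (m + d)
      = (x * y) ^ m * (y ^ d + x ^ d) := by ring
    _ ≤ (x * y) ^ m * (1 + x ^ d * y ^ d) := by gcongr
    _ = (x * y) ^ m + (x * y) ^ (m + d) := by ring

section PowerSeries

variable {c : ℕ → ℝ} (e : ℕ → ℕ)

theorem tsum_mul_tsum_pow_le (hc : ∀ k, 0 ≤ c k) (hcs : Summable c) {x y : ℝ}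
    (hx0 : 0 ≤ x) (hx1 : x ≤ 1) (hy0 : 0 ≤ y) (hy1 : y ≤ 1) :
    (∑' k, c k * x ^ e k) * ∑' k, c k * y ^ e k ≤ (∑' k, c k) * ∑' k, c k * (x * y) ^ e k := by
  have hsum : ∀ z : ℝ, 0 ≤ z → z ≤ 1 → HasSum (fun k => c k * z ^ e k) (∑' k, c k * z ^ e k) :=
    fun z hz0 hz1 => (hcs.of_nonneg_of_le (fun k => mul_nonneg (hc k) (pow_nonneg hz0 _))
      fun k => mul_le_of_le_one_right (hc k) (pow_le_one₀ hz0 hz1)).hasSum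
  have hxy0 : 0 ≤ x * y := mul_nonneg hx0 hy0
  have hxy1 : x * y ≤ 1 := mul_le_one₀ hx1 hy0 hy1
  set f := fun z : ℝ => ∑' k, c k * z ^ e k
  set S := ∑' k, c k
  have row : ∀ j, x ^ e j * f y + y ^ e j * f x ≤ (x * y) ^ e j * S + f (x * y) := by
    intro j
    refine hasSum_le (fun k => ?_) (((hsum y hy0 hy1).mul_left _).add ((hsum x hx0 hx1).mul_left _))
      ((hcs.hasSum.mul_left _).add (hsum _ hxy0 hxy1))
    have := mul_le_mul_of_nonneg_left
      (pow_mul_pow_add_pow_mul_pow_le hx0 hx1 hy0 hy1 (e j) (e k)) (hc k)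
    linear_combination this
  have := hasSum_le (fun j => by linear_combination mul_le_mul_of_nonneg_left (row j) (hc j))
    (((hsum x hx0 hx1).mul_right (f y)).add ((hsum y hy0 hy1).mul_right (f x)))
    (((hsum _ hxy0 hxy1).mul_right S).add (hcs.hasSum.mul_right (f (x * y))))
  change f x * f y ≤ S * f (x * y)
  linarith

theorem sum_range_le_of_hasSum_pow (hc : ∀ k, 0 ≤ c k) {g : ℝ → ℝ} {L : ℝ}
    (hg : ∀ x ∈ Set.Ioo (0 : ℝ) 1, HasSum (fun k => c k * x ^ e k) (g x))
    (hL : Tendsto g (𝓝[<] 1) (𝓝 L)) (n : ℕ) : ∑ k ∈ Finset.range n, c k ≤ L := by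
  have hpartial : Tendsto (fun x : ℝ => ∑ k ∈ Finset.range n, c k * x ^ e k) (𝓝[<] 1)
      (𝓝 (∑ k ∈ Finset.range n, c k)) := by
    have hcont : Continuous fun x : ℝ => ∑ k ∈ Finset.range n, c k * x ^ e k := by fun_prop
    simpa using (hcont.tendsto 1).mono_left nhdsWithin_le_nhds
  refine le_of_tendsto_of_tendsto hpartial hL ?_
  filter_upwards [Ioo_mem_nhdsLT (zero_lt_one' ℝ)] with x hx
  exact sum_le_hasSum _ (fun k _ => mul_nonneg (hc k) (pow_nonneg hx.1.le _)) (hg x hx)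

end PowerSeries

lemma binEnt_eq_binEntropy_div (q : ℝ) : binEnt q = Real.binEntropy q / Real.log 2 := by
  simp only [binEnt, Real.binEntropy, Real.logb, Real.log_inv]
  ring

lemma binEnt_le_one (q : ℝ) : binEnt q ≤ 1 := by
  rw [binEnt_eq_binEntropy_div]
  exact div_le_one_of_le₀ Real.binEntropy_le_log_two (Real.log_nonneg one_le_two)

lemma binEnt_one_sub (q : ℝ) : binEnt (1 - q) = binEnt q := by
  simp only [binEnt_eq_binEntropy_div, Real.binEntropy_one_sub]

lemma binEnt_zero : binEnt 0 = 0 := by simp [binEnt]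

lemma binEnt_half : binEnt (1 / 2) = 1 := by
  rw [binEnt_eq_binEntropy_div, one_div, Real.binEntropy_two_inv,
    div_self (Real.log_pos one_lt_two).ne']

lemma continuous_binEnt : Continuous binEnt := by
  simp only [funext binEnt_eq_binEntropy_div]
  fun_prop

-- Parametrised so that composing two binary symmetric channels multiplies the parameters.
noncomputable def bscCapacity (x : ℝ) : ℝ := 1 - binEnt ((1 - x) / 2)

lemma bscCapacity_neg (x : ℝ) : bscCapacity (-x) = bscCapacity x := by
  rw [bscCapacity, bscCapacity, ← binEnt_one_sub]
  ring_nf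

lemma bscCapacity_abs (x : ℝ) : bscCapacity |x| = bscCapacity x := by
  rcases abs_choice x with h | h <;> rw [h]
  exact bscCapacity_neg x

lemma bscCapacity_one : bscCapacity 1 = 1 := by simp [bscCapacity, binEnt_zero]

lemma bscCapacity_nonneg (x : ℝ) : 0 ≤ bscCapacity x := sub_nonneg.2 (binEnt_le_one _)

lemma continuous_bscCapacity : Continuous bscCapacity :=
  continuous_const.sub (continuous_binEnt.comp (by fun_prop))

noncomputable def bscCapacityCoeff (k : ℕ) : ℝ := ((2 * k + 1) * (2 * k + 2) * Real.log 2)⁻¹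

lemma bscCapacityCoeff_nonneg (k : ℕ) : 0 ≤ bscCapacityCoeff k := by
  unfold bscCapacityCoeff
  have := Real.log_nonneg one_le_two
  positivity

lemma hasSum_bscCapacity {x : ℝ} (h : |x| < 1) :
    HasSum (fun k => bscCapacityCoeff k * x ^ (2 * k + 2)) (bscCapacity x) := by
  have hx2 : |x ^ 2| < 1 := by
    rw [abs_pow]
    exact pow_lt_one₀ (abs_nonneg x) h two_ne_zero
  have hodd := (Real.hasSum_log_sub_log_of_abs_lt_one h).mul_left x
  have heven := Real.hasSum_pow_div_log_of_abs_lt_one hx2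
  have hlog2 : Real.log 2 ≠ 0 := (Real.log_pos one_lt_two).ne'
  obtain ⟨hx0, hx1⟩ := abs_lt.mp h
  have hterm : (fun k => bscCapacityCoeff k * x ^ (2 * k + 2)) =
      fun k : ℕ => (x * (2 * (1 / (2 * k + 1)) * x ^ (2 * k + 1)) - (x ^ 2) ^ (k + 1) / (k + 1)) /
        (2 * Real.log 2) := by
    ext k
    rw [bscCapacityCoeff]
    field_simp
    ring
  -- `2 log 2 · bscCapacity x = x (log (1 + x) - log (1 - x)) + log (1 - x ^ 2)`
  have hsplit : Real.log (1 - x ^ 2) = Real.log (1 + x) + Real.log (1 - x) := by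
    rw [← Real.log_mul (by linarith) (by linarith)]
    ring_nf
  have hvalue : bscCapacity x =
      (x * (Real.log (1 + x) - Real.log (1 - x)) - -Real.log (1 - x ^ 2)) / (2 * Real.log 2) := by
    rw [bscCapacity, binEnt, Real.logb, Real.logb, show 1 - (1 - x) / 2 = (1 + x) / 2 by ring,
      Real.log_div (by linarith) two_ne_zero, Real.log_div (by linarith) two_ne_zero, hsplit]
    field_simp
    ring
  rw [hterm, hvalue]
  exact (hodd.sub heven).div_const _

lemma sum_range_bscCapacityCoeff_le_one (n : ℕ) : ∑ k ∈ Finset.range n, bscCapacityCoeff k ≤ 1 := by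
  refine sum_range_le_of_hasSum_pow (fun k => 2 * k + 2) bscCapacityCoeff_nonneg
    (fun x hx => hasSum_bscCapacity (abs_lt.2 ⟨by linarith [hx.1], hx.2⟩)) ?_ n
  simpa [bscCapacity_one] using
    (continuous_bscCapacity.tendsto 1).mono_left nhdsWithin_le_nhds

lemma bscCapacity_mul_le_of_nonneg {x y : ℝ} (hx0 : 0 ≤ x) (hx1 : x < 1) (hy0 : 0 ≤ y)
    (hy1 : y < 1) : bscCapacity x * bscCapacity y ≤ bscCapacity (x * y) := by
  have hsummable := summable_of_sum_range_le bscCapacityCoeff_nonneg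
    sum_range_bscCapacityCoeff_le_one
  have htsum := Real.tsum_le_of_sum_range_le bscCapacityCoeff_nonneg
    sum_range_bscCapacityCoeff_le_one
  have hxy : |x * y| < 1 := by
    rw [abs_of_nonneg (mul_nonneg hx0 hy0)]
    nlinarith
  have key := tsum_mul_tsum_pow_le (fun k => 2 * k + 2) bscCapacityCoeff_nonneg hsummable
    hx0 hx1.le hy0 hy1.le
  rw [(hasSum_bscCapacity (abs_lt.2 ⟨by linarith, hx1⟩)).tsum_eq,
    (hasSum_bscCapacity (abs_lt.2 ⟨by linarith, hy1⟩)).tsum_eq, (hasSum_bscCapacity hxy).tsum_eq]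
    at key
  nlinarith [bscCapacity_nonneg (x * y)]

lemma bscCapacity_mul_le {x y : ℝ} (hx : |x| ≤ 1) (hy : |y| ≤ 1) :
    bscCapacity x * bscCapacity y ≤ bscCapacity (x * y) := by
  rw [← bscCapacity_abs x, ← bscCapacity_abs y, ← bscCapacity_abs (x * y), abs_mul]
  rcases hx.eq_or_lt with hx1 | hx1
  · rw [hx1, bscCapacity_one, one_mul, one_mul]
  rcases hy.eq_or_lt with hy1 | hy1
  · rw [hy1, bscCapacity_one, mul_one, mul_one]
  exact bscCapacity_mul_le_of_nonneg (abs_nonneg x) hx1 (abs_nonneg y) hy1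

lemma binEnt_mix_sub_le {q δ : ℝ} (hq0 : 0 ≤ q) (hq1 : q ≤ 1) (hδ0 : 0 ≤ δ) (hδ1 : δ ≤ 1) :
    binEnt (q * (1 - δ) + (1 - q) * δ) - binEnt δ ≤ binEnt q * (1 - binEnt δ) := by
  have h := bscCapacity_mul_le (x := 1 - 2 * q) (y := 1 - 2 * δ)
    (abs_le.2 ⟨by linarith, by linarith⟩) (abs_le.2 ⟨by linarith, by linarith⟩)
  rw [bscCapacity, bscCapacity, bscCapacity, show (1 - (1 - 2 * q)) / 2 = q by ring,
    show (1 - (1 - 2 * δ)) / 2 = δ by ring,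
    show (1 - (1 - 2 * q) * (1 - 2 * δ)) / 2 = q * (1 - δ) + (1 - q) * δ by ring] at h
  linarith

section Channels

variable {Y : Type*} [Fintype Y]

lemma ent_eq_sum_negMulLog (f : Y → ℝ) : ent f = (∑ y, Real.negMulLog (f y)) / Real.log 2 := by
  simp only [ent, Real.negMulLog, Real.logb, Finset.sum_div]
  exact Finset.sum_congr rfl fun y _ => by ring

lemma ent_const_mul (s : ℝ) (f : Y → ℝ) :
    ent (fun y => s * f y) = s * ent f + (∑ y, f y) * (Real.negMulLog s / Real.log 2) := by
  simp only [ent_eq_sum_negMulLog, Real.negMulLog_mul, Finset.sum_add_distrib, ← Finset.sum_mul,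
    ← Finset.mul_sum]
  ring

lemma MI_const_mul (q s : ℝ) (W : Bool → Y → ℝ) : MI q (fun b y => s * W b y) = s * MI q W := by
  have hmix : (fun y => q * (s * W true y) + (1 - q) * (s * W false y)) =
      fun y => s * (q * W true y + (1 - q) * W false y) := by
    ext y
    ring
  simp only [MI, hmix, ent_const_mul, Finset.sum_add_distrib, ← Finset.mul_sum]
  ring

end Channels

def pairChannel (a b : ℝ) : Bool → Bool → ℝ := fun i o => if i = o then a else b

def bsc (δ : ℝ) : Bool → Bool → ℝ := pairChannel (1 - δ) δ

lemma MI_pairChannel (q a b : ℝ) :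
    MI q (pairChannel a b) = (Real.negMulLog (q * a + (1 - q) * b) +
      Real.negMulLog (q * b + (1 - q) * a) - Real.negMulLog a - Real.negMulLog b) / Real.log 2 := by
  simp only [MI, ent_eq_sum_negMulLog, pairChannel, Fintype.sum_bool, if_true,
    Bool.false_eq_true, Bool.true_eq_false, if_false]
  ring

lemma MI_bsc (q δ : ℝ) : MI q (bsc δ) = binEnt (q * (1 - δ) + (1 - q) * δ) - binEnt δ := by
  rw [bsc, MI_pairChannel, binEnt_eq_binEntropy_div, binEnt_eq_binEntropy_div,
    Real.binEntropy_eq_negMulLog_add_negMulLog_one_sub,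
    Real.binEntropy_eq_negMulLog_add_negMulLog_one_sub,
    show q * δ + (1 - q) * (1 - δ) = 1 - (q * (1 - δ) + (1 - q) * δ) by ring]
  ring

lemma MI_half_bsc (δ : ℝ) : MI (1 / 2) (bsc δ) = 1 - binEnt δ := by
  rw [MI_bsc, show 1 / 2 * (1 - δ) + (1 - 1 / 2) * δ = 1 / 2 by ring, binEnt_half]

lemma pairChannel_eq_const_mul_bsc {a b : ℝ} (ha : 0 ≤ a) (hb : 0 ≤ b) :
    pairChannel a b = fun i o => (a + b) * bsc (b / (a + b)) i o := by
  rcases (add_nonneg ha hb).eq_or_lt with hab | hab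
  · obtain ⟨rfl, rfl⟩ : a = 0 ∧ b = 0 := ⟨by linarith, by linarith⟩
    ext i o
    simp [pairChannel]
  · ext i o
    simp only [bsc, pairChannel]
    split_ifs
    · field_simp
      ring
    · field_simp

lemma MI_pairChannel_le {q a b : ℝ} (hq0 : 0 ≤ q) (hq1 : q ≤ 1) (ha : 0 ≤ a) (hb : 0 ≤ b) :
    MI q (pairChannel a b) ≤ binEnt q * MI (1 / 2) (pairChannel a b) := by
  have hδ0 : 0 ≤ b / (a + b) := div_nonneg hb (add_nonneg ha hb)
  have hδ1 : b / (a + b) ≤ 1 := div_le_one_of_le₀ (by linarith) (add_nonneg ha hb)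
  rw [pairChannel_eq_const_mul_bsc ha hb, MI_const_mul, MI_const_mul, MI_bsc, MI_half_bsc,
    mul_left_comm]
  exact mul_le_mul_of_nonneg_left (binEnt_mix_sub_le hq0 hq1 hδ0 hδ1) (add_nonneg ha hb)

lemma MI_half_pairChannel_nonneg {a b : ℝ} (ha : 0 ≤ a) (hb : 0 ≤ b) :
    0 ≤ MI (1 / 2) (pairChannel a b) := by
  rw [pairChannel_eq_const_mul_bsc ha hb, MI_const_mul, MI_half_bsc]
  exact mul_nonneg (add_nonneg ha hb) (sub_nonneg.2 (binEnt_le_one _))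

theorem MI_BEC (q C : ℝ) : MI q (BEC (1 - C)) = C * binEnt q := by
  simp only [MI, ent_eq_sum_negMulLog, BEC, Fintype.sum_sum_type, Fintype.sum_bool,
    Fintype.sum_unique, if_true, if_false, Bool.true_eq_false, Bool.false_eq_true, sub_sub_cancel,
    mul_zero, add_zero, zero_add, Real.negMulLog_zero]
  rw [Real.negMulLog_mul, Real.negMulLog_mul, binEnt_eq_binEntropy_div,
    Real.binEntropy_eq_negMulLog_add_negMulLog_one_sub,
    show q * (1 - C) + (1 - q) * (1 - C) = 1 - C by ring]
  ring

section SymmetricChannel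

variable {Y : Type*} [Fintype Y] {N : Bool → Y → ℝ}

theorem MI_eq_half_sum_MI_pairChannel (π : Equiv.Perm Y) (hinv : ∀ y, π (π y) = y)
    (hsym : ∀ y, N true y = N false (π y)) (q : ℝ) :
    MI q N = 1 / 2 * ∑ y, MI q (pairChannel (N true y) (N false y)) := by
  -- the term for `y` is `N` restricted to the outputs `{y, π y}`; each orbit is counted twice
  have hswap : ∀ y, N true (π y) = N false y := fun y => by rw [hsym, hinv]
  have hmix : ∑ y, Real.negMulLog (q * N false y + (1 - q) * N true y) =
      ∑ y, Real.negMulLog (q * N true y + (1 - q) * N false y) := by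
    rw [← Equiv.sum_comp π fun y => Real.negMulLog (q * N false y + (1 - q) * N true y)]
    simp only [← hsym, hswap]
  have hrow : ∑ y, Real.negMulLog (N false y) = ∑ y, Real.negMulLog (N true y) := by
    rw [← Equiv.sum_comp π fun y => Real.negMulLog (N false y)]
    simp only [← hsym]
  simp only [MI_pairChannel]
  simp only [MI, ent_eq_sum_negMulLog, ← Finset.sum_div, Finset.sum_sub_distrib,
    Finset.sum_add_distrib, hmix, hrow]
  ring

theorem MI_le_binEnt_mul_MI_half (hpos : ∀ b y, 0 ≤ N b y) (π : Equiv.Perm Y)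
    (hinv : ∀ y, π (π y) = y) (hsym : ∀ y, N true y = N false (π y)) {q : ℝ} (hq0 : 0 ≤ q)
    (hq1 : q ≤ 1) : MI q N ≤ binEnt q * MI (1 / 2) N := by
  calc MI q N = 1 / 2 * ∑ y, MI q (pairChannel (N true y) (N false y)) :=
        MI_eq_half_sum_MI_pairChannel π hinv hsym q
    _ ≤ 1 / 2 * ∑ y, binEnt q * MI (1 / 2) (pairChannel (N true y) (N false y)) := by
        gcongr with y
        exact MI_pairChannel_le hq0 hq1 (hpos true y) (hpos false y)
    _ = binEnt q * MI (1 / 2) N := by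
        rw [MI_eq_half_sum_MI_pairChannel π hinv hsym, ← Finset.mul_sum]
        ring

theorem MI_half_nonneg (hpos : ∀ b y, 0 ≤ N b y) (π : Equiv.Perm Y) (hinv : ∀ y, π (π y) = y)
    (hsym : ∀ y, N true y = N false (π y)) : 0 ≤ MI (1 / 2) N := by
  rw [MI_eq_half_sum_MI_pairChannel π hinv hsym]
  exact mul_nonneg (by norm_num) (Finset.sum_nonneg fun y _ =>
    MI_half_pairChannel_nonneg (hpos true y) (hpos false y))

theorem isGreatest_MI_half (hpos : ∀ b y, 0 ≤ N b y) (π : Equiv.Perm Y)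
    (hinv : ∀ y, π (π y) = y) (hsym : ∀ y, N true y = N false (π y)) :
    IsGreatest ((fun q => MI q N) '' Set.Icc 0 1) (MI (1 / 2) N) := by
  refine ⟨⟨1 / 2, ⟨by norm_num, by norm_num⟩, rfl⟩, ?_⟩
  rintro _ ⟨q, ⟨hq0, hq1⟩, rfl⟩
  exact (MI_le_binEnt_mul_MI_half hpos π hinv hsym hq0 hq1).trans
    (mul_le_of_le_one_left (MI_half_nonneg hpos π hinv hsym) (binEnt_le_one q))

end SymmetricChannel

theorem stmt15_general {Y : Type*} [Fintype Y] (N : Bool → Y → ℝ)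
    (hpos : ∀ b y, 0 ≤ N b y)
    (π : Equiv.Perm Y) (hinv : ∀ y, π (π y) = y)
    (hsym : ∀ y, N true y = N false (π y))
    (C : ℝ) (hC : C = sSup ((fun q => MI q N) '' Set.Icc (0:ℝ) 1)) :
    ∀ q ∈ Set.Icc (0:ℝ) 1, MI q N ≤ MI q (BEC (1 - C)) := by
  rintro q ⟨hq0, hq1⟩
  have hcapacity : C = MI (1 / 2) N := hC.trans (isGreatest_MI_half hpos π hinv hsym).csSup_eq
  rw [MI_BEC, hcapacity, mul_comm]
  exact MI_le_binEnt_mul_MI_half hpos π hinv hsym hq0 hq1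

theorem stmt15 {Y : Type*} [Fintype Y] (N : Bool → Y → ℝ)
    (hpos : ∀ b y, 0 ≤ N b y) (hsum : ∀ b, ∑ y, N b y = 1)
    (π : Equiv.Perm Y) (hinv : ∀ y, π (π y) = y)
    (hsym : ∀ y, N true y = N false (π y))
    (C : ℝ) (hC : C = sSup ((fun q => MI q N) '' Set.Icc (0:ℝ) 1)) :
    ∀ q ∈ Set.Icc (0:ℝ) 1, MI q N ≤ MI q (BEC (1 - C)) :=
  stmt15_general N hpos π hinv hsym C hC
end

section
/- The qubit dephasing channel D^Z_b with b = (1−√η)/2 degrades the generalized amplitude damping channel A_{p,η} to a generalized depolarizing channel: D^Z_b ∘ A_{p,η} = D_{1−η,σ}, where D_{q,σ}(ρ) = (1−q)ρ + q·Tr(ρ)σ and σ = diag(p, 1−p). -/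
open Matrix
open scoped ComplexOrder

/-- The generalized amplitude damping channel on qubits, given by its four Kraus operators. -/
noncomputable def GAD (p η : ℝ) (ρ : Matrix (Fin 2) (Fin 2) ℂ) : Matrix (Fin 2) (Fin 2) ℂ :=
  let A₁ : Matrix (Fin 2) (Fin 2) ℂ :=
    (Real.sqrt p : ℂ) • !![1, 0; 0, (Real.sqrt η : ℂ)]
  let A₂ : Matrix (Fin 2) (Fin 2) ℂ :=
    (Real.sqrt p : ℂ) • !![0, (Real.sqrt (1 - η) : ℂ); 0, 0]
  let A₃ : Matrix (Fin 2) (Fin 2) ℂ :=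
    (Real.sqrt (1 - p) : ℂ) • !![(Real.sqrt η : ℂ), 0; 0, 1]
  let A₄ : Matrix (Fin 2) (Fin 2) ℂ :=
    (Real.sqrt (1 - p) : ℂ) • !![0, 0; (Real.sqrt (1 - η) : ℂ), 0]
  A₁ * ρ * A₁ᴴ + A₂ * ρ * A₂ᴴ + A₃ * ρ * A₃ᴴ + A₄ * ρ * A₄ᴴ

/-!
The generalized amplitude damping channel keeps the coherences of `ρ` up to the factor `√η` and
sends the populations to `η ρᵢᵢ + (1 - η) tr ρ σᵢᵢ`. Dephasing with parameter `b` fixes the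
populations and scales the coherences by `1 - 2b`, which is `√η` for `b = (1 - √η)/2`; the
composite therefore scales coherences by `η`, exactly as the generalized depolarizing channel does.
-/

theorem Complex.ofReal_sqrt_mul_self {x : ℝ} (hx : 0 ≤ x) : (√x : ℂ) * √x = x := by
  rw [← Complex.ofReal_mul, Real.mul_self_sqrt hx]

section Dephasing

variable {R : Type*} [CommRing R]

theorem pauliZ_conj (X : Matrix (Fin 2) (Fin 2) R) :
    !![1, 0; 0, -1] * X * !![1, 0; 0, -1] = !![X 0 0, -X 0 1; -X 1 0, X 1 1] := by
  rw [eta_fin_two X]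
  simp

theorem dephasing_apply (b : R) (X : Matrix (Fin 2) (Fin 2) R) :
    (1 - b) • X + b • (!![1, 0; 0, -1] * X * !![1, 0; 0, -1])
      = !![X 0 0, (1 - 2 * b) * X 0 1; (1 - 2 * b) * X 1 0, X 1 1] := by
  rw [pauliZ_conj]
  ext i j
  fin_cases i <;> fin_cases j <;> simp <;> ring

end Dephasing

theorem GAD_apply {p η : ℝ} (hp : p ∈ Set.Icc (0:ℝ) 1) (hη : η ∈ Set.Icc (0:ℝ) 1)
    (ρ : Matrix (Fin 2) (Fin 2) ℂ) :
    GAD p η ρ = !![η * ρ 0 0 + (1 - η) * p * ρ.trace, √η * ρ 0 1;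
      √η * ρ 1 0, η * ρ 1 1 + (1 - η) * (1 - p) * ρ.trace] := by
  have hp' : (√p : ℂ) * √p = p := Complex.ofReal_sqrt_mul_self hp.1
  have hq' : (√(1 - p) : ℂ) * √(1 - p) = 1 - p := by
    simpa using Complex.ofReal_sqrt_mul_self (sub_nonneg.2 hp.2)
  have hη' : (√η : ℂ) * √η = η := Complex.ofReal_sqrt_mul_self hη.1
  have hθ' : (√(1 - η) : ℂ) * √(1 - η) = 1 - η := by
    simpa using Complex.ofReal_sqrt_mul_self (sub_nonneg.2 hη.2)
  rw [eta_fin_two ρ]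
  ext i j
  fin_cases i <;> fin_cases j <;>
    simp [GAD, vecMul, dotProduct, conjTranspose_apply, Fin.sum_univ_two, trace_fin_two]
  · linear_combination (ρ 0 0 + √(1 - η) * √(1 - η) * ρ 1 1) * hp' + p * ρ 1 1 * hθ'
      + √η * √η * ρ 0 0 * hq' + (1 - p) * ρ 0 0 * hη'
  · linear_combination √η * ρ 0 1 * (hp' + hq')
  · linear_combination √η * ρ 1 0 * (hp' + hq')
  · linear_combination √η * √η * ρ 1 1 * hp' + p * ρ 1 1 * hη'
      + (ρ 1 1 + √(1 - η) * √(1 - η) * ρ 0 0) * hq' + (1 - p) * ρ 0 0 * hθ'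

theorem stmt19 (p η : ℝ) (hp : p ∈ Set.Icc (0:ℝ) 1) (hη : η ∈ Set.Icc (0:ℝ) 1) :
    ∀ ρ : Matrix (Fin 2) (Fin 2) ℂ,
      (1 - (((1 - Real.sqrt η) / 2 : ℝ) : ℂ)) • GAD p η ρ
        + (((1 - Real.sqrt η) / 2 : ℝ) : ℂ) • (!![1, 0; 0, -1] * GAD p η ρ * !![1, 0; 0, -1])
      = (η : ℂ) • ρ + ((1 - η : ℝ) : ℂ) • (ρ.trace • !![(p : ℂ), 0; 0, ((1 - p : ℝ) : ℂ)]) := by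
  intro ρ
  have hb : 1 - 2 * (((1 - √η) / 2 : ℝ) : ℂ) = √η := by push_cast; ring
  have hη' : (√η : ℂ) * √η = η := Complex.ofReal_sqrt_mul_self hη.1
  rw [dephasing_apply, GAD_apply hp hη, hb]
  ext i j
  fin_cases i <;> fin_cases j <;> simp [← mul_assoc, hη'] <;> ring
end
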